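/- Let d ≥ 1 be an integer, w > 0, δ > 0, and set w' := w − (δ√d)/2, assuming w' > 0, 1 + δ√d ≤ 2w', and 2w' < 3w. Let x, y ∈ ℝ^d satisfy ‖x − y‖₂ ≤ 1 + δ√d. If an offset v is sampled uniformly from the cube [0, 3w]^d, then the probability that there exists u ∈ v + 3w·ℤ^d with both x, y ∈ Ball(u, w') is at least 2 · V_d · (w'/(3w))^d · I_d((1 + δ√d)/(2w')). -/

import Mathlib

open MeasureTheory

/-- The Lebesgue volume of the closed unit Euclidean ball in `ℝ^d`. -/
noncomputable def unitBallVol (d : ℕ) : ℝ :=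
  (volume {z : Fin d → ℝ | Real.sqrt (∑ i, (z i) ^ 2) ≤ 1}).toReal

/-- The Lebesgue volume `C_d(u)` of the spherical cap
`{z ∈ ℝ^d : ‖z‖₂ ≤ 1, z₁ ≥ u}` of the unit `d`-ball. -/
noncomputable def capVol (d : ℕ) (hd : 0 < d) (u : ℝ) : ℝ :=
  (volume {z : Fin d → ℝ | Real.sqrt (∑ i, (z i) ^ 2) ≤ 1 ∧ u ≤ z ⟨0, hd⟩}).toReal

/-!
Cutting the lens `K = Ball(x, w') ∩ Ball(y, w')` along the cells of `3w·ℤ^d` and translating each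
piece into `[0, 3w]^d` gives pairwise disjoint subsets of the event: two points of `K` differ by at
most `2w' < 3w` in every coordinate, so no two pieces land on the same offset. Hence the event has
volume at least `vol K`. With `u = (1 + δ√d)/(2w')` we have `‖y - x‖ ≤ 2w'u`, so the part of
`Ball(x, w')` beyond the hyperplane orthogonal to `y - x` at distance `w'u` from `x` lies in
`Ball(y, w')`, and symmetrically with `x` and `y` exchanged. These two caps meet at most in a
hyperplane, and each is a translate of `w'` times a unit cap, of volume `w'^d C_d(u)` by rotation
invariance.
-/

open Metric Module Set
open scoped Pointwise RealInnerProductSpace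

section SphericalCap

variable {E : Type*} [NormedAddCommGroup E] [InnerProductSpace ℝ E]

def sphericalCap (f : E) (u : ℝ) : Set E := {z | ‖z‖ ≤ 1 ∧ u ≤ ⟪f, z⟫}

lemma inner_le_of_mem_vadd_smul_sphericalCap {p f z : E} {r u : ℝ} (hr : 0 ≤ r)
    (hz : z ∈ p +ᵥ r • sphericalCap f u) : ⟪f, p⟫ + r * u ≤ ⟪f, z⟫ := by
  obtain ⟨_, ⟨c, ⟨-, hc⟩, rfl⟩, rfl⟩ := hz
  change _ ≤ ⟪f, p + r • c⟫
  rw [inner_add_right, inner_smul_right]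
  gcongr

lemma vadd_smul_sphericalCap_subset_closedBall {x y e : E} {r u : ℝ} (he : ‖e‖ = 1)
    (hr : 0 ≤ r) (hyx : y - x = ‖y - x‖ • e) (hxy : ‖y - x‖ ≤ 2 * (r * u)) :
    x +ᵥ r • sphericalCap e u ⊆ closedBall x r ∩ closedBall y r := by
  rintro _ ⟨_, ⟨c, ⟨hc1, hcu⟩, rfl⟩, rfl⟩
  change x + r • c ∈ _
  have hrc : ‖r • c‖ ≤ r := by
    rw [norm_smul, Real.norm_of_nonneg hr]
    exact mul_le_of_le_one_right hr hc1
  refine ⟨by simpa [dist_eq_norm] using hrc, ?_⟩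
  set D := ‖y - x‖
  have hD : 0 ≤ D := norm_nonneg _
  have hsq : ‖x + r • c - y‖ ^ 2 ≤ r ^ 2 := by
    have hrcD : x + r • c - y = r • c - D • e := by rw [← hyx]; abel
    have hDe : ‖D • e‖ = D := by rw [norm_smul, he, Real.norm_of_nonneg hD, mul_one]
    have hin : u * (r * D) ≤ ⟪c, e⟫ * (r * D) := by
      rw [real_inner_comm]; exact mul_le_mul_of_nonneg_right hcu (mul_nonneg hr hD)
    rw [hrcD, norm_sub_sq_real, hDe, real_inner_smul_left, real_inner_smul_right]
    nlinarith [pow_le_pow_left₀ (norm_nonneg _) hrc 2]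
  rw [mem_closedBall, dist_eq_norm]
  exact pow_le_pow_iff_left₀ (norm_nonneg _) hr two_ne_zero |>.1 hsq

lemma exists_norm_eq_one_smul_eq {f : E} (hf : ‖f‖ = 1) (v : E) :
    ∃ e : E, ‖e‖ = 1 ∧ v = ‖v‖ • e := by
  rcases eq_or_ne v 0 with rfl | hv
  · exact ⟨f, hf, by simp⟩
  · exact ⟨‖v‖⁻¹ • v, norm_smul_inv_norm hv, (smul_inv_smul₀ (norm_ne_zero_iff.2 hv) v).symm⟩

variable [FiniteDimensional ℝ E]

lemma isCompact_sphericalCap (f : E) (u : ℝ) : IsCompact (sphericalCap f u) := by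
  refine (isCompact_closedBall (0 : E) 1).of_isClosed_subset ?_ fun z hz => ?_
  · exact (isClosed_le continuous_norm continuous_const).inter (isClosed_le continuous_const
      (continuous_const.inner continuous_id : Continuous fun z : E => ⟪f, z⟫))
  · simpa using hz.1

variable [MeasurableSpace E] [BorelSpace E]

lemma volume_sphericalCap_eq_of_norm_eq {f g : E} (h : ‖f‖ = ‖g‖) (u : ℝ) :
    volume (sphericalCap f u) = volume (sphericalCap g u) := by
  set T := (ℝ ∙ (f - g))ᗮ.reflection
  have hT : T f = g := Submodule.reflection_sub h
  have hpre : sphericalCap f u = T ⁻¹' sphericalCap g u := by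
    ext z
    simp only [sphericalCap, mem_ofPred_eq, mem_preimage, LinearIsometryEquiv.norm_map, ← hT,
      LinearIsometryEquiv.inner_map_map]
  rw [hpre, T.measurePreserving.measure_preimage
    (isCompact_sphericalCap g u).isClosed.nullMeasurableSet]

lemma volume_vadd_smul_sphericalCap (p f : E) {r : ℝ} (hr : 0 ≤ r) (u : ℝ) :
    volume (p +ᵥ r • sphericalCap f u)
      = ENNReal.ofReal (r ^ finrank ℝ E) * volume (sphericalCap f u) := by
  rw [measure_vadd, Measure.addHaar_smul_of_nonneg volume hr]

lemma volume_setOf_inner_eq {e : E} (he : e ≠ 0) (t : ℝ) :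
    volume {z : E | ⟪e, z⟫ = t} = 0 := by
  rcases eq_empty_or_nonempty {z : E | ⟪e, z⟫ = t} with h | ⟨p, hp⟩
  · rw [h, measure_empty]
  have hH : {z : E | ⟪e, z⟫ = t} = AffineSubspace.mk' p (LinearMap.ker (innerₛₗ ℝ e)) := by
    ext z
    simp [AffineSubspace.mem_mk', inner_sub_right, sub_eq_zero, hp.out]
  rw [hH]
  refine Measure.addHaar_affineSubspace _ _ fun htop => ?_
  have hep : e + p ∈ AffineSubspace.mk' p (LinearMap.ker (innerₛₗ ℝ e)) :=
    htop ▸ AffineSubspace.mem_top ℝ E _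
  simp [AffineSubspace.mem_mk', he] at hep

lemma two_mul_volume_sphericalCap_le_volume_inter_closedBall {f : E} (hf : ‖f‖ = 1) {x y : E}
    {r u : ℝ} (hr : 0 ≤ r) (hxy : ‖y - x‖ ≤ 2 * (r * u)) :
    2 * (ENNReal.ofReal (r ^ finrank ℝ E) * volume (sphericalCap f u))
      ≤ volume (closedBall x r ∩ closedBall y r) := by
  obtain ⟨e, he, hyx⟩ := exists_norm_eq_one_smul_eq hf (y - x)
  have hxy' : x - y = ‖x - y‖ • -e := by rw [norm_sub_rev, smul_neg, ← hyx, neg_sub]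
  set A := x +ᵥ r • sphericalCap e u
  set B := y +ᵥ r • sphericalCap (-e) u
  have hA : A ⊆ closedBall x r ∩ closedBall y r :=
    vadd_smul_sphericalCap_subset_closedBall he hr hyx hxy
  have hB : B ⊆ closedBall x r ∩ closedBall y r := by
    rw [inter_comm]
    exact vadd_smul_sphericalCap_subset_closedBall (by rwa [norm_neg]) hr hxy'
      (by rwa [norm_sub_rev])
  have hAB : A ∩ B ⊆ {z | ⟪e, z⟫ = ⟪e, x⟫ + r * u} := by
    rintro z ⟨hzA, hzB⟩
    have hzx := inner_le_of_mem_vadd_smul_sphericalCap hr hzA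
    have hzy := inner_le_of_mem_vadd_smul_sphericalCap hr hzB
    have hyx' : ⟪e, y⟫ - ⟪e, x⟫ = ‖y - x‖ := by
      conv_lhs => rw [← inner_sub_right, hyx]
      rw [inner_smul_right, real_inner_self_eq_norm_sq, he, one_pow, mul_one]
    simp only [inner_neg_left] at hzy
    exact le_antisymm (by linarith) hzx
  have hBmeas : MeasurableSet B :=
    (((isCompact_sphericalCap _ _).smul r).vadd y).isClosed.measurableSet
  calc 2 * (ENNReal.ofReal (r ^ finrank ℝ E) * volume (sphericalCap f u))
      = volume A + volume B := by
        rw [volume_vadd_smul_sphericalCap _ _ hr, volume_vadd_smul_sphericalCap _ _ hr,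
          volume_sphericalCap_eq_of_norm_eq (he.trans hf.symm),
          volume_sphericalCap_eq_of_norm_eq ((norm_neg e).trans (he.trans hf.symm)), two_mul]
    _ = volume (A ∪ B) := by
        rw [← measure_union_add_inter A hBmeas,
          measure_mono_null hAB (volume_setOf_inner_eq (norm_ne_zero_iff.1 (by simp [he])) _),
          add_zero]
    _ ≤ volume (closedBall x r ∩ closedBall y r) := measure_mono (union_subset hA hB)

end SphericalCap

section Periodization

variable {ι : Type*}

def latticeCell (a : ℝ) (k : ι → ℤ) : Set (ι → ℝ) :=
  univ.pi fun i => Ico (a * k i) (a * (k i + 1))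

lemma mem_latticeCell_floor {a : ℝ} (ha : 0 < a) (u : ι → ℝ) :
    u ∈ latticeCell a (fun i => ⌊u i / a⌋) := by
  intro i _
  constructor
  · rw [mul_comm, ← le_div_iff₀ ha]
    exact Int.floor_le _
  · rw [mul_comm, ← div_lt_iff₀ ha]
    exact Int.lt_floor_add_one _

lemma Int.eq_of_abs_mul_sub_mul_lt {a : ℝ} (ha : 0 < a) {m n : ℤ} (h : |a * m - a * n| < a) :
    m = n := by
  rw [← mul_sub, abs_mul, abs_of_pos ha, mul_lt_iff_lt_one_right ha] at h
  have hmn : |m - n| < 1 := by exact_mod_cast h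
  exact sub_eq_zero.1 (Int.abs_lt_one_iff.1 hmn)

lemma volume_le_volume_setOf_exists_add_mem [Fintype ι] {a : ℝ} (ha : 0 < a) {L : Set (ι → ℝ)}
    (hL : MeasurableSet L) (hdiam : ∀ u ∈ L, ∀ u' ∈ L, ∀ i, |u i - u' i| < a) :
    volume L ≤ volume {v : ι → ℝ | (∀ i, v i ∈ Icc 0 a) ∧
      ∃ k : ι → ℤ, (fun i => v i + a * k i) ∈ L} := by
  let shift (k : ι → ℤ) : ι → ℝ := fun i => a * k i
  let piece (k : ι → ℤ) : Set (ι → ℝ) := (· + shift k) ⁻¹' (L ∩ latticeCell a k)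
  have hdisj : Pairwise (Function.onFun Disjoint piece) := by
    refine fun k k' hkk' => disjoint_left.2 fun v hv hv' => hkk' (funext fun i => ?_)
    have := hdiam _ hv.1 _ hv'.1 i
    simp only [Pi.add_apply, shift, add_sub_add_left_eq_sub] at this
    exact Int.eq_of_abs_mul_sub_mul_lt ha this
  have hsub : ∀ k, piece k ⊆ {v : ι → ℝ | (∀ i, v i ∈ Icc 0 a) ∧
      ∃ k : ι → ℤ, (fun i => v i + a * k i) ∈ L} := by
    rintro k v ⟨hvL, hvcell⟩
    refine ⟨fun i => ?_, k, hvL⟩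
    obtain ⟨h1, h2⟩ := hvcell i (mem_univ i)
    simp only [Pi.add_apply, shift, mul_add, mul_one] at h1 h2
    constructor <;> linarith
  calc volume L ≤ volume (⋃ k, L ∩ latticeCell a k) :=
        measure_mono fun u hu => mem_iUnion.2 ⟨_, hu, mem_latticeCell_floor ha u⟩
    _ ≤ ∑' k, volume (L ∩ latticeCell a k) := measure_iUnion_le _
    _ = ∑' k, volume (piece k) := by simp only [piece, measure_preimage_add_right]
    _ = volume (⋃ k, piece k) :=
        (measure_iUnion hdisj fun k => measurable_add_const _
          (hL.inter (MeasurableSet.univ_pi fun _ => measurableSet_Ico))).symm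
    _ ≤ _ := measure_mono (iUnion_subset hsub)

lemma volume_setOf_forall_mem_Icc_and_ne_top [Fintype ι] (a b : ℝ) (P : (ι → ℝ) → Prop) :
    volume {v : ι → ℝ | (∀ i, v i ∈ Icc a b) ∧ P v} ≠ ⊤ :=
  ne_top_of_le_ne_top (isCompact_univ_pi fun _ => isCompact_Icc).measure_lt_top.ne
    (measure_mono fun _ hv i _ => hv.1 i)

end Periodization

section EuclideanCoordinates

variable {ι : Type*} [Fintype ι]

lemma volume_preimage_toLp (s : Set (EuclideanSpace ℝ ι)) :
    volume (WithLp.toLp 2 ⁻¹' s) = volume s :=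
  (EuclideanSpace.volume_preserving_symm_measurableEquiv_toLp ι).symm.measure_preimage_equiv s

lemma dist_toLp_eq_sqrt (p q : ι → ℝ) :
    dist (WithLp.toLp 2 p : EuclideanSpace ℝ ι) (WithLp.toLp 2 q) = √(∑ i, (p i - q i) ^ 2) := by
  simp [EuclideanSpace.dist_eq, Real.dist_eq, sq_abs]

lemma norm_toLp_eq_sqrt (p : ι → ℝ) :
    ‖(WithLp.toLp 2 p : EuclideanSpace ℝ ι)‖ = √(∑ i, p i ^ 2) := by
  simp [EuclideanSpace.norm_eq, sq_abs]

def euclideanLens (x y : ι → ℝ) (r : ℝ) : Set (ι → ℝ) :=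
  {p | √(∑ i, (x i - p i) ^ 2) ≤ r ∧ √(∑ i, (y i - p i) ^ 2) ≤ r}

lemma euclideanLens_eq_preimage (x y : ι → ℝ) (r : ℝ) :
    euclideanLens x y r = WithLp.toLp 2 ⁻¹'
      (closedBall (WithLp.toLp 2 x : EuclideanSpace ℝ ι) r ∩ closedBall (WithLp.toLp 2 y) r) := by
  ext p
  simp only [euclideanLens, mem_ofPred_eq, mem_preimage, mem_inter_iff, mem_closedBall',
    dist_toLp_eq_sqrt]

lemma measurableSet_euclideanLens (x y : ι → ℝ) (r : ℝ) : MeasurableSet (euclideanLens x y r) :=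
  euclideanLens_eq_preimage x y r ▸
    (isClosed_closedBall.inter isClosed_closedBall).measurableSet.preimage
      (WithLp.measurable_toLp 2 _)

lemma abs_sub_le_of_mem_euclideanLens {x y p q : ι → ℝ} {r : ℝ} (hp : p ∈ euclideanLens x y r)
    (hq : q ∈ euclideanLens x y r) (i : ι) : |p i - q i| ≤ 2 * r := by
  rw [euclideanLens_eq_preimage] at hp hq
  have hpq := PiLp.dist_apply_le (WithLp.toLp 2 p : EuclideanSpace ℝ ι) (WithLp.toLp 2 q) i
  rw [PiLp.toLp_apply, PiLp.toLp_apply, Real.dist_eq] at hpq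
  linarith [dist_triangle_right (WithLp.toLp 2 p : EuclideanSpace ℝ ι) (WithLp.toLp 2 q)
    (WithLp.toLp 2 x), mem_closedBall.1 hp.1, mem_closedBall.1 hq.1]

lemma two_mul_volume_sphericalCap_le_volume_euclideanLens {f : EuclideanSpace ℝ ι}
    (hf : ‖f‖ = 1) {x y : ι → ℝ} {r u : ℝ} (hr : 0 ≤ r)
    (hxy : √(∑ i, (x i - y i) ^ 2) ≤ 2 * (r * u)) :
    2 * (ENNReal.ofReal (r ^ Fintype.card ι) * volume (sphericalCap f u))
      ≤ volume (euclideanLens x y r) := by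
  rw [euclideanLens_eq_preimage, volume_preimage_toLp, ← finrank_euclideanSpace (𝕜 := ℝ)]
  exact two_mul_volume_sphericalCap_le_volume_inter_closedBall hf hr
    (by rwa [← dist_eq_norm, dist_comm, dist_toLp_eq_sqrt])

end EuclideanCoordinates

lemma unitBallVol_eq_volume_closedBall (d : ℕ) :
    unitBallVol d = (volume (closedBall (0 : EuclideanSpace ℝ (Fin d)) 1)).toReal := by
  rw [unitBallVol, ← volume_preimage_toLp]
  congr with z
  simp [norm_toLp_eq_sqrt]

lemma unitBallVol_pos (d : ℕ) : 0 < unitBallVol d := by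
  rw [unitBallVol_eq_volume_closedBall]
  exact ENNReal.toReal_pos (measure_closedBall_pos volume 0 one_pos).ne'
    measure_closedBall_lt_top.ne

lemma capVol_eq_volume_sphericalCap (d : ℕ) (hd : 0 < d) (u : ℝ) :
    capVol d hd u = (volume (sphericalCap
      (EuclideanSpace.single ⟨0, hd⟩ 1 : EuclideanSpace ℝ (Fin d)) u)).toReal := by
  rw [capVol, ← volume_preimage_toLp]
  congr with z
  simp [sphericalCap, norm_toLp_eq_sqrt, EuclideanSpace.inner_single_left]

/-- With `w' = w − δ√d/2` and `‖x − y‖₂ ≤ 1 + δ√d`, for a uniform offset `v ∈ [0, 3w]^d`, the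
probability that some `u ∈ v + 3w·ℤ^d` satisfies `x, y ∈ Ball(u, w')` is at least
`2 · V_d · (w'/(3w))^d · I_d((1 + δ√d)/(2w'))`. -/
theorem prob_close_pair_covered (d : ℕ) (hd : 1 ≤ d) (w δ w' : ℝ) (hw' : 0 < w')
    (h2 : 2 * w' < 3 * w)
    (x y : Fin d → ℝ) (hxy : Real.sqrt (∑ i, (x i - y i) ^ 2) ≤ 1 + δ * Real.sqrt d) :
    2 * unitBallVol d * (w' / (3 * w)) ^ d *
        (capVol d (by omega) ((1 + δ * Real.sqrt d) / (2 * w')) / unitBallVol d)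
      ≤ (volume {v : Fin d → ℝ | (∀ i, v i ∈ Set.Icc (0 : ℝ) (3 * w)) ∧
          ∃ k : Fin d → ℤ,
            Real.sqrt (∑ i, (x i - (v i + 3 * w * (k i))) ^ 2) ≤ w' ∧
            Real.sqrt (∑ i, (y i - (v i + 3 * w * (k i))) ^ 2) ≤ w'}).toReal / (3 * w) ^ d := by
  set u := (1 + δ * √d) / (2 * w')
  have hu : 2 * (w' * u) = 1 + δ * √d := by
    simp only [u]
    field_simp
  have hcover := (two_mul_volume_sphericalCap_le_volume_euclideanLens
    (f := EuclideanSpace.single ⟨0, by omega⟩ 1) (by simp) hw'.le (hu ▸ hxy)).trans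
    (volume_le_volume_setOf_exists_add_mem (a := 3 * w) (by linarith)
      (measurableSet_euclideanLens x y w') fun p hp q hq i =>
        (abs_sub_le_of_mem_euclideanLens hp hq i).trans_lt h2)
  calc _ = (2 * (ENNReal.ofReal (w' ^ Fintype.card (Fin d)) * volume (sphericalCap
        (EuclideanSpace.single ⟨0, by omega⟩ 1 : EuclideanSpace ℝ (Fin d)) u))).toReal
          / (3 * w) ^ d := by
        rw [capVol_eq_volume_sphericalCap, ENNReal.toReal_mul, ENNReal.toReal_mul,
          ENNReal.toReal_ofNat, ENNReal.toReal_ofReal (by positivity), Fintype.card_fin, div_pow]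
        field_simp [(unitBallVol_pos d).ne']
    _ ≤ _ := div_le_div_of_nonneg_right (ENNReal.toReal_mono
        (volume_setOf_forall_mem_Icc_and_ne_top _ _ _) hcover) (pow_pos (by linarith) d).le
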